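/- arXiv:1207.1971 — 5 statements merged into one kernel-verified Lean document; each statement's English description precedes it below -/
import Mathlib

section
/- Assume ρ ≥ ℶ_ω and there is a regular cardinal ν with μ < ν < ℶ_ω and a family ℬ ⊆ [ρ]^{≤ν} of size ρ such that every u ∈ [ρ]^ν is contained in the union of fewer than ν members of ℬ. Then every μ-almost disjoint family 𝒜 ⊆ [ρ]^ν has cardinality at most ρ. -/
open Cardinal Ordinal Set

/-!
Since `ν` is regular and each `A ∈ 𝒜` is covered by fewer than `ν` members of `ℬ`, some `B ∈ ℬ`
meets `A` in `ν ≥ μ` points. For a fixed `B`, almost disjointness makes `A ↦ A ∩ B` injective on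
the members of `𝒜` meeting `B` in at least `μ` points, so there are at most `2 ^ |B| ≤ 2 ^ ν` of
them. Hence `|𝒜| ≤ |ℬ| · 2 ^ ν ≤ ρ`, as `2 ^ ν < ℶ_ω ≤ ρ` because `ℶ_ω` is a strong limit.
-/

theorem exists_le_mk_inter_of_subset_sUnion {α : Type*} {ν : Cardinal} (hν : ν.IsRegular)
    {A : Set α} {P : Set (Set α)} (hA : ν ≤ #A) (hAP : A ⊆ ⋃₀ P) (hP : #P < ν) :
    ∃ B ∈ P, ν ≤ #(A ∩ B : Set α) := by
  by_contra! h
  have hunion : #(⋃ B ∈ P, A ∩ B) < ν := (card_biUnion_lt_iff_forall_of_isRegular hν hP).2 h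
  rw [← inter_iUnion₂, ← sUnion_eq_biUnion, inter_eq_left.2 hAP] at hunion
  exact (hA.trans_lt hunion).false

theorem Set.Pairwise.mk_setOf_le_mk_inter_le_two_power {α : Type*} {μ : Cardinal}
    {𝒜 : Set (Set α)} (had : 𝒜.Pairwise fun A A' => #(A ∩ A' : Set α) < μ) (B : Set α) :
    #{A ∈ 𝒜 | μ ≤ #(A ∩ B : Set α)} ≤ 2 ^ #B := by
  have hinj : InjOn (· ∩ B) {A ∈ 𝒜 | μ ≤ #(A ∩ B : Set α)} := by
    intro A ⟨hA, hAB⟩ A' ⟨hA', _⟩ htrace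
    by_contra hne
    have hsub : A ∩ B ⊆ A ∩ A' := fun x hx => ⟨hx.1, (htrace.subst (motive := (x ∈ ·)) hx).1⟩
    exact (hAB.trans (mk_le_mk_of_subset hsub)).not_gt (had hA hA' hne)
  rw [← mk_image_eq_of_injOn _ _ hinj, ← mk_powerset]
  exact mk_le_mk_of_subset (image_subset_iff.2 fun A _ => inter_subset_right)

theorem Set.Pairwise.mk_le_mul_two_power {α : Type*} {μ ν : Cardinal} {𝒜 ℬ : Set (Set α)}
    (had : 𝒜.Pairwise fun A A' => #(A ∩ A' : Set α) < μ) (hℬ : ∀ B ∈ ℬ, #B ≤ ν)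
    (htrace : ∀ A ∈ 𝒜, ∃ B ∈ ℬ, μ ≤ #(A ∩ B : Set α)) :
    #𝒜 ≤ #ℬ * 2 ^ ν := by
  have hcover : 𝒜 ⊆ ⋃ B ∈ ℬ, {A ∈ 𝒜 | μ ≤ #(A ∩ B : Set α)} := fun A hA => by
    obtain ⟨B, hB, hAB⟩ := htrace A hA
    exact mem_biUnion hB ⟨hA, hAB⟩
  refine (mk_le_mk_of_subset hcover).trans ((mk_biUnion_le _ _).trans ?_)
  gcongr
  exact ciSup_le' fun B => (had.mk_setOf_le_mk_inter_le_two_power B).trans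
    (power_le_power_left two_ne_zero (hℬ B B.2))

theorem stmt_2_general {β : Type} (ρ μ ν : Cardinal) (hρ : beth ω ≤ ρ)
    (hreg : ν.IsRegular) (hμν : μ < ν) (hν : ν < beth ω)
    (ℬ : Set (Set β)) (hℬsize : #ℬ = ρ) (hℬ : ∀ B ∈ ℬ, #B ≤ ν)
    (hcover : ∀ u : Set β, #u = ν →
      ∃ P : Set (Set β), P ⊆ ℬ ∧ #P < ν ∧ u ⊆ ⋃₀ P)
    (𝒜 : Set (Set β)) (h𝒜 : ∀ A ∈ 𝒜, #A = ν)
    (had : ∀ A ∈ 𝒜, ∀ A' ∈ 𝒜, A ≠ A' → #(A ∩ A' : Set β) < μ) :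
    #𝒜 ≤ ρ := by
  have htrace : ∀ A ∈ 𝒜, ∃ B ∈ ℬ, μ ≤ #(A ∩ B : Set β) := fun A hA => by
    obtain ⟨P, hPℬ, hPν, hAP⟩ := hcover A (h𝒜 A hA)
    obtain ⟨B, hB, hAB⟩ := exists_le_mk_inter_of_subset_sUnion hreg (h𝒜 A hA).ge hAP hPν
    exact ⟨B, hPℬ hB, hμν.le.trans hAB⟩
  have h2ν : 2 ^ ν ≤ ρ :=
    ((isStrongLimit_beth.2 isSuccLimit_omega0.isSuccPrelimit).isStrongPrelimit hν).le.trans hρ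
  calc #𝒜 ≤ #ℬ * 2 ^ ν := Set.Pairwise.mk_le_mul_two_power had hℬ htrace
    _ ≤ ρ * ρ := by rw [hℬsize]; gcongr
    _ = ρ := mul_eq_self ((aleph0_le_beth ω).trans hρ)

/-- Assume `ρ ≥ ℶ_ω` (realized as the cardinality of a type `β`), `ν` is a
regular cardinal with `μ < ν < ℶ_ω`, and `ℬ` is a family of subsets of `β` of
size at most `ν`, with `#ℬ = ρ`, such that every `u ⊆ β` of size `ν` is
contained in the union of fewer than `ν` members of `ℬ`. Then every
`μ`-almost disjoint family `𝒜 ⊆ [β]^ν` has cardinality at most `ρ`. -/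
theorem stmt_2 {β : Type} (ρ μ ν : Cardinal) (hβ : #β = ρ) (hρ : beth ω ≤ ρ)
    (hreg : ν.IsRegular) (hμν : μ < ν) (hν : ν < beth ω)
    (ℬ : Set (Set β)) (hℬsize : #ℬ = ρ) (hℬ : ∀ B ∈ ℬ, #B ≤ ν)
    (hcover : ∀ u : Set β, #u = ν →
      ∃ P : Set (Set β), P ⊆ ℬ ∧ #P < ν ∧ u ⊆ ⋃₀ P)
    (𝒜 : Set (Set β)) (h𝒜 : ∀ A ∈ 𝒜, #A = ν)
    (had : ∀ A ∈ 𝒜, ∀ A' ∈ 𝒜, A ≠ A' → #(A ∩ A' : Set β) < μ) :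
    #𝒜 ≤ ρ :=
  stmt_2_general ρ μ ν hρ hreg hμν hν ℬ hℬsize hℬ hcover 𝒜 h𝒜 had
end

section
/- Let ν be a regular cardinal and 𝒜 a μ-almost disjoint family of sets with μ < ν, where each A ∈ 𝒜 has |A| ≥ ν. Suppose ℬ is a family of sets, each of size ≤ ν, such that for every A ∈ 𝒜 there is B ∈ ℬ with |A ∩ B| = ν. Then |𝒜| ≤ |ℬ| · sup{2^{|B|} : B ∈ ℬ}. -/
open Cardinal Set

/-!
Choose for each `A ∈ 𝒜` some `B ∈ ℬ` with `#(A ∩ B) = ν`. Two distinct members of `𝒜` sharing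
the same `B` have distinct traces on `B`: equal traces would put `A ∩ B` inside `A ∩ A'`, of size
`< μ < ν`. So `A ↦ (B, A ∩ B)` is injective, and there are at most `∑_{B ∈ ℬ} 2 ^ #B` such pairs.
-/

universe u

section

variable {α : Type u}

theorem Set.injOn_inter_of_pairwise_mk_inter_lt {𝒜 : Set (Set α)} {ν : Cardinal}
    (had : 𝒜.Pairwise fun A A' => #(A ∩ A' : Set α) < ν) (B : Set α) :
    InjOn (· ∩ B) {A ∈ 𝒜 | ν ≤ #(A ∩ B : Set α)} := by
  intro A ⟨hA, hAB⟩ A' ⟨hA', _⟩ (htrace : A ∩ B = A' ∩ B)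
  by_contra hne
  have hsub : A ∩ B ⊆ A ∩ A' := fun x hx =>
    ⟨hx.1, (show x ∈ A' ∩ B from htrace ▸ hx).1⟩
  exact (hAB.trans (mk_le_mk_of_subset hsub)).not_gt (had hA hA' hne)

theorem Cardinal.mk_sigma_set_le (ℬ : Set (Set α)) :
    #(Σ B : ℬ, Set (B : Set α)) ≤ #ℬ * ⨆ B : ℬ, 2 ^ #(B : Set α) :=
  calc #(Σ B : ℬ, Set (B : Set α))
      = Cardinal.sum (fun B : ℬ => 2 ^ #(B : Set α)) := by simp only [mk_sigma, mk_set]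
    _ ≤ #ℬ * ⨆ B : ℬ, 2 ^ #(B : Set α) := sum_le_mk_mul_iSup _

theorem Cardinal.mk_le_mk_mul_iSup_two_pow_of_injective_trace {𝒜 ℬ : Set (Set α)} (b : 𝒜 → ℬ)
    (hb : ∀ A A' : 𝒜, b A = b A' → (A : Set α) ∩ b A = (A' : Set α) ∩ b A → A = A') :
    #𝒜 ≤ #ℬ * ⨆ B : ℬ, 2 ^ #(B : Set α) := by
  let trace : 𝒜 → Σ B : ℬ, Set (B : Set α) := fun A => ⟨b A, (↑) ⁻¹' (A : Set α)⟩
  have htrace_inj : Function.Injective trace := by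
    intro A A' h
    obtain ⟨hbA, hpre⟩ := Sigma.mk.inj_iff.mp h
    refine hb A A' hbA ?_
    rw [← hbA] at hpre
    simpa only [inter_comm _ (b A : Set α)] using
      Subtype.preimage_coe_eq_preimage_coe_iff.mp (eq_of_heq hpre)
  exact (mk_le_of_injective htrace_inj).trans (mk_sigma_set_le ℬ)

end

theorem stmt_3_general {α : Type} (μ ν : Cardinal) (hμν : μ < ν)
    (𝒜 ℬ : Set (Set α))
    (had : ∀ A ∈ 𝒜, ∀ A' ∈ 𝒜, A ≠ A' → #(A ∩ A' : Set α) < μ)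
    (htrace : ∀ A ∈ 𝒜, ∃ B ∈ ℬ, #(A ∩ B : Set α) = ν) :
    #𝒜 ≤ #ℬ * ⨆ B : ℬ, 2 ^ #(B : Set α) := by
  choose B hBℬ hBν using htrace
  have hinj := injOn_inter_of_pairwise_mk_inter_lt (𝒜 := 𝒜) (ν := ν)
    fun A hA A' hA' hne => (had A hA A' hA' hne).trans hμν
  refine mk_le_mk_mul_iSup_two_pow_of_injective_trace (fun A => ⟨B A A.2, hBℬ A A.2⟩) ?_
  rintro ⟨A, hA⟩ ⟨A', hA'⟩ hb htrace
  simp only [Subtype.mk.injEq] at hb htrace ⊢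
  exact hinj (B A hA) ⟨hA, (hBν A hA).ge⟩ ⟨hA', hb ▸ (hBν A' hA').ge⟩ htrace

/-- Let `ν` be a regular cardinal, `𝒜` a `μ`-almost disjoint family of sets
(`μ < ν`) with every member of size `≥ ν`, and `ℬ` a family of sets of size
`≤ ν` such that every `A ∈ 𝒜` has `#(A ∩ B) = ν` for some `B ∈ ℬ`.
Then `#𝒜 ≤ #ℬ * sup {2 ^ #B : B ∈ ℬ}`. -/
theorem stmt_3 {α : Type} (μ ν : Cardinal) (hreg : ν.IsRegular) (hμν : μ < ν)
    (𝒜 ℬ : Set (Set α))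
    (h𝒜 : ∀ A ∈ 𝒜, ν ≤ #A)
    (had : ∀ A ∈ 𝒜, ∀ A' ∈ 𝒜, A ≠ A' → #(A ∩ A' : Set α) < μ)
    (hℬ : ∀ B ∈ ℬ, #B ≤ ν)
    (htrace : ∀ A ∈ 𝒜, ∃ B ∈ ℬ, #(A ∩ B : Set α) = ν) :
    #𝒜 ≤ #ℬ * ⨆ B : ℬ, 2 ^ #(B : Set α) :=
  stmt_3_general μ ν hμν 𝒜 ℬ had htrace
end

section
/- Let κ be an infinite cardinal and 𝒜 a κ-hereditarily essentially disjoint family of sets. Then for every set Y, the family 𝒜⌈Y = {A ∈ 𝒜 : |A ∩ Y| ≥ κ} has cardinality at most |Y| + κ (in particular, if |Y| ≥ κ then |𝒜⌈Y| ≤ |Y|). -/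
open Cardinal Ordinal Set

def EssentiallyDisjoint {α : Type} (κ : Cardinal) (ℬ : Set (Set α)) : Prop :=
  ∃ F : Set α → Set α,
    (∀ B ∈ ℬ, F B ⊆ B ∧ #(F B) < κ) ∧
    (∀ B ∈ ℬ, ∀ B' ∈ ℬ, B ≠ B' → Disjoint (B \ F B) (B' \ F B'))

def HED {α : Type} (κ : Cardinal) (𝒜 : Set (Set α)) : Prop :=
  ∀ H : Set α → Set α, (∀ A ∈ 𝒜, H A ⊆ A ∧ #(H A) = κ) →
    EssentiallyDisjoint κ (H '' 𝒜)

/-! Two distinct members of a `κ`-hereditarily essentially disjoint family `𝒜` meet in fewer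
than `κ` points: otherwise a `κ`-subset `S` of the intersection and `S` minus one point would be
distinct members of an essentially disjoint family sharing `κ` points. Hence a choice of
`κ`-subsets `H A ⊆ A ∩ Y` is injective on `𝒜⌈Y`, and the family of the `H A` is essentially
disjoint, so picking in each `H A` a point outside the removed part and outside all the others
injects `𝒜⌈Y` into `Y`. -/

lemma Cardinal.mk_sdiff_singleton_of_aleph0_le {α : Type*} {S : Set α} (hS : ℵ₀ ≤ #S) (x : α) :
    #(S \ {x} : Set α) = #S := by
  refine le_antisymm (mk_le_mk_of_subset sdiff_subset) ?_
  have hle := le_mk_sdiff_add_mk S {x}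
  rw [mk_singleton] at hle
  have hinf : ℵ₀ ≤ #(S \ {x} : Set α) := by
    by_contra! hfin
    exact (hle.trans_lt (add_lt_aleph0 hfin one_lt_aleph0)).not_ge hS
  rwa [add_one_eq hinf] at hle

namespace EssentiallyDisjoint

variable {α : Type} {κ : Cardinal} {ℬ : Set (Set α)}

lemma mono {ℬ' : Set (Set α)} (h : EssentiallyDisjoint κ ℬ) (h' : ℬ' ⊆ ℬ) :
    EssentiallyDisjoint κ ℬ' := by
  obtain ⟨F, hF, hdisj⟩ := h
  exact ⟨F, fun B hB => hF B (h' hB), fun B hB B' hB' => hdisj B (h' hB) B' (h' hB')⟩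

lemma mk_inter_lt (h : EssentiallyDisjoint κ ℬ) (hκ : ℵ₀ ≤ κ) {B B' : Set α} (hB : B ∈ ℬ)
    (hB' : B' ∈ ℬ) (hne : B ≠ B') : #(B ∩ B' : Set α) < κ := by
  obtain ⟨F, hF, hdisj⟩ := h
  have hcover : B ∩ B' ⊆ F B ∪ F B' := by
    rintro x ⟨hxB, hxB'⟩
    by_contra hx
    rw [mem_union, not_or] at hx
    exact disjoint_left.mp (hdisj B hB B' hB' hne) ⟨hxB, hx.1⟩ ⟨hxB', hx.2⟩
  calc #(B ∩ B' : Set α) ≤ #(F B ∪ F B' : Set α) := mk_le_mk_of_subset hcover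
    _ ≤ #(F B) + #(F B') := mk_union_le _ _
    _ < κ := add_lt_of_lt hκ (hF B hB).2 (hF B' hB').2

lemma mk_le {Y : Set α} (h : EssentiallyDisjoint κ ℬ) (hcard : ∀ B ∈ ℬ, κ ≤ #B)
    (hY : ∀ B ∈ ℬ, B ⊆ Y) : #ℬ ≤ #Y := by
  obtain ⟨F, hF, hdisj⟩ := h
  have hpick : ∀ B : ℬ, ∃ y : Y, (y : α) ∈ B.1 \ F B.1 := by
    rintro ⟨B, hB⟩
    obtain ⟨y, hy⟩ := sdiff_nonempty_of_mk_lt_mk ((hF B hB).2.trans_le (hcard B hB))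
    exact ⟨⟨y, hY B hB hy.1⟩, hy⟩
  choose f hf using hpick
  refine mk_le_of_injective (f := f) fun B B' hBB' => ?_
  by_contra hne
  exact disjoint_left.mp (hdisj B B.2 B' B'.2 (Subtype.coe_ne_coe.mpr hne)) (hf B) (hBB' ▸ hf B')

end EssentiallyDisjoint

namespace HED

variable {α : Type} {κ : Cardinal} {𝒜 : Set (Set α)}

lemma essentiallyDisjoint_image {𝒜' : Set (Set α)} {H : Set α → Set α} (h : HED κ 𝒜)
    (hcard : ∀ A ∈ 𝒜, κ ≤ #A) (h𝒜' : 𝒜' ⊆ 𝒜) (hH : ∀ A ∈ 𝒜', H A ⊆ A ∧ #(H A) = κ) :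
    EssentiallyDisjoint κ (H '' 𝒜') := by
  classical
  choose! G hG using fun A (hA : A ∈ 𝒜) => le_mk_iff_exists_subset.mp (hcard A hA)
  have hext := h (fun A => if A ∈ 𝒜' then H A else G A) fun A hA => by
    split_ifs with hA'
    · exact hH A hA'
    · exact hG A hA
  refine hext.mono ?_
  rintro _ ⟨A, hA, rfl⟩
  exact ⟨A, h𝒜' hA, if_pos hA⟩

lemma mk_inter_lt (h : HED κ 𝒜) (hκ : ℵ₀ ≤ κ) (hcard : ∀ A ∈ 𝒜, κ ≤ #A) {A A' : Set α}
    (hA : A ∈ 𝒜) (hA' : A' ∈ 𝒜) (hne : A ≠ A') : #(A ∩ A' : Set α) < κ := by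
  classical
  by_contra! hbig
  obtain ⟨S, hSAA', hS⟩ := le_mk_iff_exists_subset.mp hbig
  obtain ⟨x, hx⟩ : S.Nonempty := by
    rw [← nonempty_coe_sort, ← mk_ne_zero_iff, hS]
    exact (aleph0_pos.trans_le hκ).ne'
  have hSx : #(S \ {x} : Set α) = κ := hS ▸ mk_sdiff_singleton_of_aleph0_le (hS ▸ hκ) x
  let H : Set α → Set α := fun B => if B = A then S else S \ {x}
  have hHA : H A = S := if_pos rfl
  have hHA' : H A' = S \ {x} := if_neg hne.symm
  have hH : ∀ B ∈ ({A, A'} : Set (Set α)), H B ⊆ B ∧ #(H B) = κ := by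
    rintro B (rfl | rfl)
    · exact hHA ▸ ⟨hSAA'.trans inter_subset_left, hS⟩
    · exact hHA' ▸ ⟨sdiff_subset.trans (hSAA'.trans inter_subset_right), hSx⟩
  have hED := h.essentiallyDisjoint_image hcard (pair_subset hA hA') hH
  have hSne : H A ≠ H A' := by
    rw [hHA, hHA']
    exact fun hSS => (hSS ▸ hx : x ∈ S \ {x}).2 rfl
  have hlt := hED.mk_inter_lt hκ (mem_image_of_mem H (mem_insert A {A'}))
    (mem_image_of_mem H (mem_insert_of_mem A rfl)) hSne
  rw [hHA, hHA', inter_eq_right.mpr sdiff_subset, hSx] at hlt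
  exact hlt.false

lemma mk_sep_le (h : HED κ 𝒜) (hκ : ℵ₀ ≤ κ) (hcard : ∀ A ∈ 𝒜, κ ≤ #A) (Y : Set α) :
    #({A ∈ 𝒜 | κ ≤ #(A ∩ Y : Set α)}) ≤ #Y := by
  set 𝒜Y := {A ∈ 𝒜 | κ ≤ #(A ∩ Y : Set α)}
  choose! H hH using fun A (hA : A ∈ 𝒜Y) => le_mk_iff_exists_subset.mp hA.2
  have hHA : ∀ A ∈ 𝒜Y, H A ⊆ A ∧ #(H A) = κ :=
    fun A hA => ⟨(hH A hA).1.trans inter_subset_left, (hH A hA).2⟩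
  have hinj : InjOn H 𝒜Y := by
    intro A hA A' hA' hAA'
    by_contra hne
    refine (h.mk_inter_lt hκ hcard hA.1 hA'.1 hne).not_ge ?_
    rw [← (hHA A hA).2]
    exact mk_le_mk_of_subset (subset_inter (hHA A hA).1 (hAA' ▸ (hHA A' hA').1))
  calc #𝒜Y = #(H '' 𝒜Y) := (mk_image_eq_of_injOn H 𝒜Y hinj).symm
    _ ≤ #Y := (h.essentiallyDisjoint_image hcard (sep_subset _ _) hHA).mk_le
        (by rintro _ ⟨A, hA, rfl⟩; exact (hHA A hA).2.ge)
        (by rintro _ ⟨A, hA, rfl⟩; exact (hH A hA).1.trans inter_subset_right)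

end HED

/-- If `κ` is infinite and `𝒜` is a `κ`-hereditarily essentially disjoint
family of sets (each of size `≥ κ`, so that the notion is nonvacuous), then
for every set `Y` the subfamily `𝒜⌈Y = {A ∈ 𝒜 : #(A ∩ Y) ≥ κ}` has
cardinality at most `#Y + κ`; in particular it is `≤ #Y` when `#Y ≥ κ`. -/
theorem stmt_9 {α : Type} (κ : Cardinal) (hκ : ℵ₀ ≤ κ)
    (𝒜 : Set (Set α)) (h𝒜 : ∀ A ∈ 𝒜, κ ≤ #A) (hhed : HED κ 𝒜)
    (Y : Set α) :
    #({A ∈ 𝒜 | κ ≤ #(A ∩ Y : Set α)}) ≤ #Y + κ ∧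
    (κ ≤ #Y → #({A ∈ 𝒜 | κ ≤ #(A ∩ Y : Set α)}) ≤ #Y) := by
  have hle := hhed.mk_sep_le hκ h𝒜 Y
  exact ⟨hle.trans (self_le_add_right _ _), fun _ => hle⟩
end

section
/- Let λ be a regular uncountable cardinal, κ < λ an infinite cardinal, and 𝒜 = {A_α : α < λ} ⊆ [λ]^{≥κ} a κ-almost disjoint family. Suppose f : λ → λ is an injective function such that f(α) belongs to the set of the first κ elements of A_α, for each α < λ. Let ⟨N_ζ : 1 ≤ ζ < λ⟩ be an increasing continuous chain of elementary submodels of H(θ) (θ large) with κ + ζ ⊆ N_ζ ∩ λ ∈ λ, |N_ζ| = κ + |ζ|, and with the sequence ⟨A_α : α < λ⟩ and f in N_1. Then for every ζ and every α < λ: if |A_α ∩ N_ζ| ≥ κ then α ∈ N_ζ. -/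
open Cardinal Ordinal Set FirstOrder

/-- The ordinal rank of an element of the canonical type `o.ToType` of a
well-order of type `o`. -/
noncomputable def rankIn (o : Ordinal) (x : o.ToType) : Ordinal :=
  @Ordinal.typein o.ToType (· < ·) ⟨⟩ x

/-- Function symbols of the language `⟨<, R, f⟩`: a single unary function
symbol (interpreted by the injection `f`). -/
def setFun : ℕ → Type := fun n => match n with | 1 => Unit | _ => Empty

/-- Relation symbols of the language `⟨<, R, f⟩`: two binary relation symbols
(`false` interpreted by the ordinal order, `true` by the membership relation
`x ∈ A a` of the family). -/
def setRel : ℕ → Type := fun n => match n with | 2 => Bool | _ => Empty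

/-- The first-order language `⟨<, R, f⟩` with the well-order, the family
membership relation and the regressive function as primitives; a chain of
elementary submodels of `H(θ)` containing `⟨A_α : α < λ⟩` and `f` induces a
chain of elementary substructures of `(λ; <, R, f)`, which is how we render
the hypothesis. -/
def setLang : Language := ⟨setFun, setRel⟩

/-!
Fewer than `κ` points of `A a` lie below `f a`, while the initial segment `N ζ` contains `κ` of
them, so `f a ∈ N ζ`. As `f` is injective, `a` is the unique preimage of `f a`, which is first-order
definable from `f a`; an elementary substructure containing `f a` therefore contains `a`.
-/

theorem IsLowerSet.mem_of_card_lt_card_inter {α : Type*} [LinearOrder α] {N A : Set α}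
    (hN : IsLowerSet N) {x : α} (hx : #{y ∈ A | y < x} < #(A ∩ N : Set α)) : x ∈ N := by
  by_contra hxN
  refine hx.not_ge (mk_le_mk_of_subset fun y ⟨hyA, hyN⟩ => ⟨hyA, ?_⟩)
  exact lt_of_not_ge fun hxy => hxN (hN hxy hyN)

universe u

namespace FirstOrder.Language.ElementarySubstructure

open Structure

variable {L : Language} {M : Type u} [L.Structure M]

theorem mem_of_funMap_mem (S : L.ElementarySubstructure M) {F : L.Functions 1}
    (hF : Function.Injective fun x : M => funMap F ![x]) {x : M} (hx : funMap F ![x] ∈ S) :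
    x ∈ S := by
  let inRange : L.Formula (Fin 1) := (F.apply₁ (var (Sum.inr 0)) =' var (Sum.inl 0)).ex
  have realize_inRange {N : Type u} [L.Structure N] (v : Fin 1 → N) :
      inRange.Realize v ↔ ∃ y, funMap F ![y] = v 0 := by
    simp [inRange, Formula.Realize, Fin.snoc]
  obtain ⟨y, hy⟩ := (realize_inRange _).1
    ((S.subtype.map_formula inRange ![⟨_, hx⟩]).1 ((realize_inRange _).2 ⟨x, rfl⟩))
  have hcomp : ((↑) ∘ ![y] : Fin 1 → M) = ![(y : M)] := by
    ext i
    fin_cases i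
    rfl
  have hyx : (y : M) = x := hF <| by
    simpa [hcomp] using congrArg S.subtype hy
  exact hyx ▸ y.2

end FirstOrder.Language.ElementarySubstructure

theorem stmt_12_general (lam κ : Cardinal) (A : lam.ord.ToType → Set lam.ord.ToType)
    (f : lam.ord.ToType → lam.ord.ToType)
    (hfinj : Function.Injective f)
    (hf : ∀ a, f a ∈ A a ∧ #({y ∈ A a | y < f a}) < κ)
    [S : setLang.Structure lam.ord.ToType]
    (hSf : ∀ v : Fin 1 → lam.ord.ToType,
      Language.Structure.funMap (L := setLang) (n := 1) () v = f (v 0))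
    (N : Ordinal → setLang.ElementarySubstructure lam.ord.ToType)
    (hNinit : ∀ ζ, 1 ≤ ζ → ζ < lam.ord →
      ∃ d : lam.ord.ToType, (N ζ : Set lam.ord.ToType) = Set.Iio d) :
    ∀ ζ, 1 ≤ ζ → ζ < lam.ord → ∀ a : lam.ord.ToType,
      κ ≤ #((A a ∩ (N ζ : Set lam.ord.ToType) : Set lam.ord.ToType)) →
      a ∈ N ζ := by
  intro ζ hζ1 hζlam a hcard
  have hfunMap : ∀ x, Language.Structure.funMap (L := setLang) (n := 1) () ![x] = f x :=
    fun x => hSf ![x]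
  have hlower : IsLowerSet (N ζ : Set lam.ord.ToType) := by
    obtain ⟨d, hd⟩ := hNinit ζ hζ1 hζlam
    exact hd ▸ isLowerSet_Iio d
  have hfa : f a ∈ N ζ := hlower.mem_of_card_lt_card_inter ((hf a).2.trans_le hcard)
  refine (N ζ).mem_of_funMap_mem (F := ()) ?_ (by rwa [hfunMap])
  simpa only [hfunMap] using hfinj

/-- Let `lam` be a regular uncountable cardinal, `κ < lam` infinite, and
`𝒜 = {A a : a < lam}` a `κ`-almost disjoint family of subsets of `lam`
(represented by its canonical type `lam.ord.ToType`), each of size `≥ κ`.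
Let `f` be injective with `f a` among the first `κ` elements of `A a`.
Let `⟨N ζ : 1 ≤ ζ < lam⟩` be an increasing continuous chain of elementary
submodels (of `H(θ)`, rendered as elementary substructures of the induced
structure `(λ; <, R, f)`, which automatically contains the parameters
`⟨A a⟩` and `f`) with `κ + ζ ⊆ N ζ ∩ λ ∈ λ` and `|N ζ| = κ + |ζ|`.
Then for every such `ζ` and every `a`: if `#(A a ∩ N ζ) ≥ κ`,
then `a ∈ N ζ`. -/
theorem stmt_12 (lam κ : Cardinal) (hreg : lam.IsRegular) (hunc : ℵ₀ < lam)
    (hκ : ℵ₀ ≤ κ) (hκlam : κ < lam)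
    (A : lam.ord.ToType → Set lam.ord.ToType)
    (hsize : ∀ a, κ ≤ #(A a))
    (had : ∀ a b, a ≠ b → #(A a ∩ A b : Set lam.ord.ToType) < κ)
    (f : lam.ord.ToType → lam.ord.ToType)
    (hfinj : Function.Injective f)
    (hf : ∀ a, f a ∈ A a ∧ #({y ∈ A a | y < f a}) < κ)
    [S : setLang.Structure lam.ord.ToType]
    (hSf : ∀ v : Fin 1 → lam.ord.ToType,
      Language.Structure.funMap (L := setLang) (n := 1) () v = f (v 0))
    (hSR : ∀ v : Fin 2 → lam.ord.ToType,
      Language.Structure.RelMap (L := setLang) (n := 2) true v ↔ v 1 ∈ A (v 0))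
    (hSlt : ∀ v : Fin 2 → lam.ord.ToType,
      Language.Structure.RelMap (L := setLang) (n := 2) false v ↔ v 0 < v 1)
    (N : Ordinal → setLang.ElementarySubstructure lam.ord.ToType)
    (hNmono : ∀ ζ ξ, 1 ≤ ζ → ζ ≤ ξ → ξ < lam.ord →
      (N ζ : Set lam.ord.ToType) ⊆ (N ξ : Set lam.ord.ToType))
    (hNcont : ∀ ξ, ξ < lam.ord → Order.IsSuccLimit ξ →
      (N ξ : Set lam.ord.ToType) = ⋃ ζ ∈ Set.Ico (1 : Ordinal) ξ,
        (N ζ : Set lam.ord.ToType))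
    (hNinit : ∀ ζ, 1 ≤ ζ → ζ < lam.ord →
      ∃ d : lam.ord.ToType, (N ζ : Set lam.ord.ToType) = Set.Iio d)
    (hNlow : ∀ ζ, 1 ≤ ζ → ζ < lam.ord → ∀ x : lam.ord.ToType,
      rankIn lam.ord x < κ.ord + ζ → x ∈ N ζ)
    (hNcard : ∀ ζ, 1 ≤ ζ → ζ < lam.ord →
      #((N ζ : Set lam.ord.ToType)) = κ + ζ.card) :
    ∀ ζ, 1 ≤ ζ → ζ < lam.ord → ∀ a : lam.ord.ToType,
      κ ≤ #((A a ∩ (N ζ : Set lam.ord.ToType) : Set lam.ord.ToType)) →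
      a ∈ N ζ :=
  stmt_12_general lam κ A f hfinj hf (S := S) hSf N hNinit
end

section
/- Let κ be an infinite cardinal with cf(κ) ≠ cf(χ) where χ ∈ {ω, ω₁} is chosen so that χ ≠ cf(κ) (χ = ω if cf(κ) ≠ ω, else χ = ω₁). Let 𝒜 = {A_α : α < λ} be a family of subsets of λ. Call Y ⊆ λ good if: (G1) A_α ∩ A_β ⊆ Y for distinct α, β ∈ Y; (G2) |A_α ∩ Y| ≥ κ for all α ∈ Y; (G3) for all α, if |A_α ∩ Y| ≥ κ then α ∈ Y. Then the union of any ⊆-increasing χ-chain of good sets is good. -/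
/-
(G1) and (G2) pass to the union of any chain of good sets. For (G3), the trace of `A a` on the
union is the union of the traces, so it suffices that a chain `S` indexed by a well-order `ι` with
`cof ι ≠ cf κ`, whose union has size `≥ κ`, has a member of size `≥ κ`. Suppose every member is
smaller than `κ`. If `cof ι < cf κ`, the members along a cofinal subset of `ι` of size `cof ι`
have sizes with supremum `< κ`, and these members cover the union. If `κ < cof ι`, a subset of
size `κ` of the union lies in a single member. Otherwise `cf κ < cof ι < κ`, so no bound `< κ` on
the sizes of the members is possible, and the members whose sizes exceed the points of a cofinal
subset of `κ` of size `cf κ` have a common upper bound in the chain, which is then of size `≥ κ`.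
-/

open Cardinal Ordinal Set

/-- Call `Y ⊆ α` *good* (for the family `A : α → Set α` and cardinal `κ`) if
(G1) `A a ∩ A b ⊆ Y` for distinct `a, b ∈ Y`, (G2) `#(A a ∩ Y) ≥ κ` for all
`a ∈ Y`, and (G3) `#(A a ∩ Y) ≥ κ` implies `a ∈ Y`. -/
def Good {α : Type} (κ : Cardinal) (A : α → Set α) (Y : Set α) : Prop :=
  (∀ a ∈ Y, ∀ b ∈ Y, a ≠ b → A a ∩ A b ⊆ Y) ∧
  (∀ a ∈ Y, κ ≤ #(A a ∩ Y : Set α)) ∧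
  (∀ a, κ ≤ #(A a ∩ Y : Set α) → a ∈ Y)

universe u v w

section Chain
variable {α : Type u} {ι : Type v} [LinearOrder ι] {S : ι → Set α}

theorem Order.lift_cof_le_of_monotone_of_forall_exists_lt {β : Type w} [LinearOrder β]
    {f : ι → β} (hf : Monotone f) (hunb : ∀ b, ∃ i, b < f i) :
    lift.{w} (Order.cof ι) ≤ lift.{v} (Order.cof β) := by
  obtain ⟨D, hD, hDcard⟩ := Order.exists_cof_eq β
  choose g hg using fun d : D => hunb d
  have hcofinal : IsCofinal (range g) := by
    intro j
    by_contra! hj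
    obtain ⟨d, hdD, hjd⟩ := hD (f j)
    exact (hjd.trans_lt (hg ⟨d, hdD⟩)).not_ge (hf (hj _ ⟨_, rfl⟩).le)
  calc lift.{w} (Order.cof ι) ≤ lift.{w} #(range g) := lift_le.2 (Order.cof_le hcofinal)
    _ ≤ lift.{v} #D := mk_range_le_lift
    _ = lift.{v} (Order.cof β) := by rw [hDcard]

theorem exists_subset_of_lift_mk_lt_cof (hS : Monotone S) {T : Set α}
    (hT : T ⊆ ⋃ i, S i) (hTι : lift.{v} #T < lift.{u} (Order.cof ι)) : ∃ i, T ⊆ S i := by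
  choose idx hidx using fun x : T => mem_iUnion.1 (hT x.2)
  have hbdd : ¬ IsCofinal (range idx) := fun h =>
    ((lift_le.2 (Order.cof_le h)).trans mk_range_le_lift).not_gt hTι
  obtain ⟨j, hj⟩ := not_isCofinal_iff.1 hbdd
  exact ⟨j, fun x hx => hS (hj _ ⟨⟨x, hx⟩, rfl⟩).le (hidx ⟨x, hx⟩)⟩

theorem lift_mk_iUnion_le_of_isCofinal (hS : Monotone S) {C : Set ι} (hC : IsCofinal C)
    {μ : Cardinal.{u}} (hμ : ∀ c ∈ C, #(S c) ≤ μ) :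
    lift.{v} #(⋃ i, S i) ≤ lift.{u} #C * lift.{v} μ := by
  have hcover : ⋃ i, S i = ⋃ c ∈ C, S c := by
    refine (iUnion_subset fun i => ?_).antisymm (iUnion₂_subset fun c _ => subset_iUnion S c)
    obtain ⟨c, hcC, hic⟩ := hC i
    exact (hS hic).trans (subset_biUnion_of_mem hcC)
  rw [hcover]
  refine (mk_biUnion_le_lift S C).trans ?_
  gcongr
  exact ciSup_le' fun c => lift_le.2 (hμ c c.2)

theorem exists_le_mk_of_lift_cof_lt {κ : Cardinal.{u}} (hκ : ℵ₀ ≤ κ) (hS : Monotone S)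
    (hlt : lift.{u} (Order.cof ι) < lift.{v} κ.ord.cof) (hU : κ ≤ #(⋃ i, S i)) :
    ∃ i, κ ≤ #(S i) := by
  by_contra! hsmall
  obtain ⟨C, hC, hCcard⟩ := Order.exists_cof_eq ι
  have hμ : ⨆ c : C, #(S c) < κ :=
    lift_iSup_lt_of_lt_cof_ord (by simpa [hCcard] using hlt) fun c => hsmall c
  have hCκ : lift.{u} #C < lift.{v} κ := hCcard ▸ hlt.trans_le (lift_le.2 (cof_ord_le κ))
  have hbdd : BddAbove (range fun c : C => #(S c)) := ⟨κ, by
    rintro _ ⟨c, rfl⟩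
    exact (hsmall c).le⟩
  have hcover := lift_mk_iUnion_le_of_isCofinal hS hC fun c hc => le_ciSup hbdd ⟨c, hc⟩
  exact (hcover.trans_lt (mul_lt_of_lt (by simpa using hκ) hCκ (lift_lt.2 hμ))).not_ge
    (lift_le.2 hU)

theorem exists_le_mk_of_lt_lift_cof [WellFoundedLT ι] {κ : Cardinal.{u}} (hκ : ℵ₀ ≤ κ)
    (hS : Monotone S) (hlt : lift.{v} κ.ord.cof < lift.{u} (Order.cof ι))
    (hU : κ ≤ #(⋃ i, S i)) : ∃ i, κ ≤ #(S i) := by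
  rcases lt_or_ge (lift.{v} κ) (lift.{u} (Order.cof ι)) with hκι | hικ
  · obtain ⟨T, hTU, hTκ⟩ := le_mk_iff_exists_subset.1 hU
    obtain ⟨i, hi⟩ := exists_subset_of_lift_mk_lt_cof hS hTU (hTκ ▸ hκι)
    exact ⟨i, hTκ ▸ mk_le_mk_of_subset hi⟩
  by_contra! hsmall
  -- `cof ι` is regular, so `cof ι = κ` would force `cf κ = cof ι`.
  have hικ : lift.{u} (Order.cof ι) < lift.{v} κ := by
    refine hικ.lt_of_ne fun h => hlt.ne ?_
    have h' := congrArg (fun c => c.ord.cof) h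
    simp only [← Cardinal.lift_ord, ← Ordinal.lift_cof, Order.cof_ord_cof] at h'
    exact h'.symm
  obtain ⟨C, hC, hCcard⟩ := Order.exists_cof_eq ι
  let f : ι → κ.ord.ToType := fun i => ToType.mk ⟨(#(S i)).ord, ord_lt_ord.2 (hsmall i)⟩
  have hf : Monotone f := fun i j hij =>
    ToType.mk.monotone (ord_le_ord.2 (mk_le_mk_of_subset (hS hij)))
  have hunb : ∀ o, ∃ i, o < f i := by
    intro o
    by_contra! hbdd
    have hbound : ∀ i, #(S i) ≤ (ToType.mk.symm o : Ordinal).card := fun i =>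
      ord_le.1 (ToType.mk.le_symm_apply.2 (hbdd i))
    have hcover := lift_mk_iUnion_le_of_isCofinal hS hC fun c _ => hbound c
    refine (hcover.trans_lt (mul_lt_of_lt (by simpa using hκ) (hCcard ▸ hικ) ?_)).not_ge
      (lift_le.2 hU)
    exact lift_lt.2 (lt_ord.1 (ToType.mk.symm o).2)
  have := Order.lift_cof_le_of_monotone_of_forall_exists_lt hf hunb
  rw [cof_toType] at this
  exact this.not_gt hlt

theorem exists_le_mk_of_le_mk_iUnion [WellFoundedLT ι] {κ : Cardinal.{u}} (hκ : ℵ₀ ≤ κ)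
    (hcof : lift.{u} (Order.cof ι) ≠ lift.{v} κ.ord.cof) (hS : Monotone S)
    (hU : κ ≤ #(⋃ i, S i)) : ∃ i, κ ≤ #(S i) :=
  hcof.lt_or_gt.elim (exists_le_mk_of_lift_cof_lt hκ hS · hU)
    (exists_le_mk_of_lt_lift_cof hκ hS · hU)

end Chain

theorem good_iUnion_of_monotone {α : Type} {ι : Type v} [LinearOrder ι] [WellFoundedLT ι]
    {κ : Cardinal} {A : α → Set α} {Y : ι → Set α} (hκ : ℵ₀ ≤ κ)
    (hcof : lift.{0} (Order.cof ι) ≠ lift.{v} κ.ord.cof) (hY : Monotone Y)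
    (hgood : ∀ i, Good κ A (Y i)) : Good κ A (⋃ i, Y i) := by
  refine ⟨?_, ?_, ?_⟩
  · simp only [mem_iUnion]
    rintro a ⟨i, hai⟩ b ⟨j, hbj⟩ hab
    exact ((hgood (max i j)).1 a (hY (le_max_left i j) hai) b (hY (le_max_right i j) hbj)
      hab).trans (subset_iUnion Y _)
  · simp only [mem_iUnion]
    rintro a ⟨i, hai⟩
    exact ((hgood i).2.1 a hai).trans
      (mk_le_mk_of_subset (inter_subset_inter_right _ (subset_iUnion Y i)))
  · intro a ha
    rw [inter_iUnion] at ha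
    obtain ⟨i, hi⟩ := exists_le_mk_of_le_mk_iUnion hκ hcof
      (fun i j hij => inter_subset_inter_right (A a) (hY hij)) ha
    exact mem_iUnion.2 ⟨i, (hgood i).2.2 a hi⟩

/-- Let `κ` be an infinite cardinal and `χ ∈ {ω, ω₁}` chosen with
`χ ≠ cf(κ)`, namely `χ = ω` if `cf κ ≠ ω` and `χ = ω₁` otherwise.  Then for
any family `A : α → Set α`, the union of a `⊆`-increasing `χ`-chain of good
sets is good. -/
theorem stmt_13 {α : Type} (κ χ : Cardinal) (hκ : ℵ₀ ≤ κ)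
    (hχ : (κ.ord.cof ≠ ℵ₀ ∧ χ = ℵ₀) ∨ (κ.ord.cof = ℵ₀ ∧ χ = aleph 1))
    (A : α → Set α)
    (Y : Ordinal → Set α)
    (hmono : ∀ i j, i ≤ j → j < χ.ord → Y i ⊆ Y j)
    (hgood : ∀ i < χ.ord, Good κ A (Y i)) :
    Good κ A (⋃ i < χ.ord, Y i) := by
  have hcof : lift.{0} (Order.cof (Iio χ.ord)) ≠ lift κ.ord.cof := by
    rw [Ordinal.cof_Iio, ← Ordinal.lift_cof, Cardinal.lift_lift]
    rcases hχ with ⟨hκχ, rfl⟩ | ⟨hκχ, rfl⟩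
    · rw [isRegular_aleph0.cof_ord, lift_aleph0, ne_comm, Ne, lift_eq_aleph0]
      exact hκχ
    · rw [isRegular_aleph_one.cof_ord, hκχ, lift_aleph0, lift_aleph, Ordinal.lift_one]
      exact aleph0_lt_aleph_one.ne'
  have hY : Monotone fun i : Iio χ.ord => Y i := fun i j hij => hmono i j hij j.2
  simpa [biUnion_eq_iUnion] using good_iUnion_of_monotone hκ hcof hY fun i => hgood i i.2
end
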